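/- arXiv:1212.5536 — 2 statements merged into one kernel-verified Lean document; each statement's English description precedes it below -/
import Mathlib

section
/- For any octonions a and b, the norm is multiplicative: ‖a·b‖ = ‖a‖ · ‖b‖. -/
open scoped Quaternion

/-- The octonions, as the Cayley–Dickson double of the quaternions. -/
abbrev Octonion : Type := ℍ[ℝ] × ℍ[ℝ]

/-- Cayley–Dickson (octonion) multiplication. -/
noncomputable def octMul (x y : Octonion) : Octonion :=
  (x.1 * y.1 - star y.2 * x.2, y.2 * x.1 + x.2 * star y.1)

/-- The Euclidean norm on the octonions. -/
noncomputable def octNorm (a : Octonion) : ℝ :=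
  Real.sqrt (Quaternion.normSq a.1 + Quaternion.normSq a.2)

lemma re_mul_comm (p q : ℍ[ℝ]) : (p * q).re = (q * p).re := by
  simp [Quaternion.re_mul, mul_comm]

lemma normSq_key (x1 x2 y1 y2 : ℍ[ℝ]) :
    Quaternion.normSq (x1 * y1 - star y2 * x2) +
      Quaternion.normSq (y2 * x1 + x2 * star y1) =
    (Quaternion.normSq x1 + Quaternion.normSq x2) *
      (Quaternion.normSq y1 + Quaternion.normSq y2) := by
  have h1 : Quaternion.normSq (x1 * y1 - star y2 * x2) =
      Quaternion.normSq (x1 * y1) + Quaternion.normSq (star y2 * x2)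
        - 2 * ((x1 * y1) * star (star y2 * x2)).re := by
    rw [sub_eq_add_neg, Quaternion.normSq_add, Quaternion.normSq_neg, star_neg,
      mul_neg, Quaternion.re_neg, mul_neg]
    ring
  have h2 : Quaternion.normSq (y2 * x1 + x2 * star y1) =
      Quaternion.normSq (y2 * x1) + Quaternion.normSq (x2 * star y1)
        + 2 * ((y2 * x1) * star (x2 * star y1)).re := Quaternion.normSq_add _ _
  have hcross : ((x1 * y1) * star (star y2 * x2)).re
      = ((y2 * x1) * star (x2 * star y1)).re := by
    rw [star_mul, star_star, star_mul, star_star, ← mul_assoc, ← mul_assoc]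
    rw [re_mul_comm (x1 * y1 * star x2) y2]
    simp [mul_assoc]
  rw [h1, h2, hcross, map_mul, map_mul, map_mul, map_mul, Quaternion.normSq_star,
    Quaternion.normSq_star]
  ring

/-- The octonion norm is multiplicative. -/
theorem octonion_norm_mul :
    ∀ a b : Octonion, octNorm (octMul a b) = octNorm a * octNorm b := by
  intro a b
  unfold octNorm octMul
  rw [← Real.sqrt_mul (add_nonneg (Quaternion.normSq_nonneg) (Quaternion.normSq_nonneg))]
  congr 1
  exact normSq_key a.1 a.2 b.1 b.2
end

section
/- (Cartan–Dieudonné, reflections generate) Every isometry of an n-dimensional real inner product space fixing the origin is a composition of at most n reflections in hyperplanes. -/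
open FiniteDimensional

lemma reflection_zero_eq_one {E : Type*} [NormedAddCommGroup E] [InnerProductSpace ℝ E]
    [FiniteDimensional ℝ E] : Submodule.reflection (ℝ ∙ (0 : E))ᗮ = 1 := by
  ext x
  simp only [LinearIsometryEquiv.coe_one, id_eq]
  exact Submodule.reflection_mem_subspace_eq_self (by simp [Submodule.mem_orthogonal])

open Classical in
lemma filter_prod_eq {E : Type*} [NormedAddCommGroup E] [InnerProductSpace ℝ E]
    [FiniteDimensional ℝ E] (L : List E) :
    ((L.filter (fun v => v ≠ 0)).map fun v => Submodule.reflection (ℝ ∙ v)ᗮ).prod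
      = (L.map fun v => Submodule.reflection (ℝ ∙ v)ᗮ).prod := by
  induction L with
  | nil => rfl
  | cons a L ih =>
    by_cases ha : a = 0
    · subst ha
      rw [List.filter_cons_of_neg (by simp), List.map_cons, List.prod_cons,
        reflection_zero_eq_one, one_mul, ih]
    · rw [List.filter_cons_of_pos (by simpa), List.map_cons, List.map_cons,
        List.prod_cons, List.prod_cons, ih]

/-- Cartan–Dieudonné: every linear isometry of an n-dimensional real inner product space
is a composition of at most n hyperplane reflections. -/
theorem cartan_dieudonne {E : Type*} [NormedAddCommGroup E] [InnerProductSpace ℝ E]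
    [FiniteDimensional ℝ E] (f : E ≃ₗᵢ[ℝ] E) :
    ∃ L : List E, (∀ v ∈ L, v ≠ 0) ∧ L.length ≤ Module.finrank ℝ E ∧
      f = (L.map fun v => Submodule.reflection (ℝ ∙ v)ᗮ).prod := by
  classical
  obtain ⟨L, hL, hf⟩ := f.reflections_generate_dim
  refine ⟨L.filter (fun v => v ≠ 0), ?_, ?_, ?_⟩
  · intro v hv
    simpa using (List.mem_filter.mp hv).2
  · exact le_trans (List.length_filter_le _ _) hL
  · rw [filter_prod_eq]; exact hf
end
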